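/- arXiv:1009.2698 — 2 statements merged into one kernel-verified Lean document; each statement's English description precedes it below -/
import Mathlib

section
/- Let ψ: [0,1] → ℝ be continuously differentiable with ψ' Lipschitz with constant L. Then there is a constant C (depending only on ψ and L) such that for all positive integers N and all λ ∈ [0, 0.5], |(1/N) Σ_{t=1}^{N} ψ((2t−1)/(2N)) e^{-i 2π λ t} − (∫_0^1 ψ(u) e^{-i 2π N λ u} du) · e^{-i π λ} · (π λ)/sin(π λ)| ≤ C/N, where (πλ)/sin(πλ) is interpreted as 1 at λ = 0. -/
/-
On the cell `[(t-1)/N, t/N]` the oscillating factor integrates exactly: because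
`e^{-iπλ}(1 - e^{2πiλ}) = -2i sin(πλ)`,
`(πλ / sin πλ) e^{-iπλ} ∫_{cell} e^{-2πiNλu} du = e^{-2πiλt} / N`.
So the difference to be estimated is `e^{-iπλ} (πλ / sin πλ)` times
`∑_t ∫_{cell} (ψ(m_t) - ψ(u)) e^{-2πiNλu} du`, where `m_t = (2t-1)/(2N)` is the midpoint of the
cell. Being `C¹`, `ψ` is `K`-Lipschitz on `[0,1]`, so each cell contributes at most `K/N²`, and
Jordan's inequality `sin x ≥ 2x/π` gives `|πλ / sin πλ| ≤ π/2` for `λ ≤ 1/2`; hence `C = πK/2`.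
-/

open Real Complex Finset

noncomputable def invSincPi (lam : ℝ) : ℂ :=
  if lam = 0 then 1 else (Real.pi * lam / Real.sin (Real.pi * lam) : ℂ)

lemma norm_invSincPi_le {lam : ℝ} (h0 : 0 ≤ lam) (h1 : lam ≤ 1 / 2) :
    ‖invSincPi lam‖ ≤ π / 2 := by
  rcases h0.eq_or_lt with rfl | hpos
  · simp [invSincPi]; linarith [Real.pi_gt_three]
  have hx : 0 < π * lam := by positivity
  have hjordan : 2 / π * (π * lam) ≤ Real.sin (π * lam) :=
    Real.mul_le_sin hx.le (by nlinarith [Real.pi_pos])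
  have hsin : 0 < Real.sin (π * lam) := lt_of_lt_of_le (by positivity) hjordan
  rw [invSincPi, if_neg hpos.ne', ← Complex.ofReal_mul, ← Complex.ofReal_div, Complex.norm_real,
    Real.norm_of_nonneg (by positivity), div_le_iff₀ hsin]
  calc π * lam = π / 2 * (2 / π * (π * lam)) := by field_simp
    _ ≤ π / 2 * Real.sin (π * lam) := by gcongr

lemma integral_exp_mul_exp_mul_invSincPi {N : ℕ} (hN : 0 < N) {lam : ℝ}
    (hsin : lam ≠ 0 → Real.sin (π * lam) ≠ 0) (s : ℝ) :
    (∫ u in (s - 1) / N..s / N, exp (-(I * 2 * π * N * lam * u))) * exp (-(I * π * lam))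
        * invSincPi lam = 1 / N * exp (-(I * 2 * π * lam * s)) := by
  have hN' : (N : ℂ) ≠ 0 := by exact_mod_cast hN.ne'
  rcases eq_or_ne lam 0 with rfl | hlam
  · simp [invSincPi]; field_simp; ring
  have hlam' : (lam : ℂ) ≠ 0 := by exact_mod_cast hlam
  have hpi : (π : ℂ) ≠ 0 := by exact_mod_cast Real.pi_ne_zero
  set c : ℂ := -(I * 2 * π * N * lam) with hc
  have hc0 : c ≠ 0 := by simp [hc, hN', hlam', hpi, I_ne_zero]
  set q := exp (I * π * lam)
  have hq : q ≠ 0 := Complex.exp_ne_zero _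
  have hsinq : ((Real.sin (π * lam) : ℝ) : ℂ) = (q⁻¹ - q) * I / 2 := by
    rw [Complex.ofReal_sin, Complex.sin, ← Complex.exp_neg]; simp only [q]; push_cast; ring_nf
  have hright : exp (c * ↑(s / N)) = exp (-(I * 2 * π * lam * s)) := by
    congr 1; push_cast; field_simp; ring
  have hleft : exp (c * ↑((s - 1) / N)) = exp (-(I * 2 * π * lam * s)) * q * q := by
    rw [← Complex.exp_add, ← Complex.exp_add]; congr 1; push_cast; field_simp; ring
  have hs : q⁻¹ - q ≠ 0 := by
    intro h; apply hsin hlam; apply Complex.ofReal_injective; rw [hsinq, h]; simp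
  simp only [show ∀ u : ℝ, -(I * 2 * π * N * lam * u) = c * u from fun u => by rw [hc]; ring]
  rw [integral_exp_mul_complex hc0, hright, hleft, invSincPi, if_neg hlam, hsinq,
    Complex.exp_neg (I * π * lam)]
  generalize exp (-(I * 2 * π * lam * s)) = E
  change (E - E * q * q) / c * q⁻¹ * (π * lam / ((q⁻¹ - q) * I / 2)) = 1 / N * E
  rw [show E - E * q * q = E * q * (q⁻¹ - q) by field_simp, hc]
  generalize q⁻¹ - q = d at hs ⊢
  field_simp
  rw [I_sq]
  ring

lemma Icc_cell_subset_Icc_zero_one {N t : ℕ} (ht : t ∈ Finset.Icc 1 N) :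
    Set.Icc (((t : ℝ) - 1) / N) ((t : ℝ) / N) ⊆ Set.Icc 0 1 := by
  obtain ⟨ht1, htN⟩ := Finset.mem_Icc.1 ht
  have hN : (0 : ℝ) < N := by exact_mod_cast ht1.trans htN
  refine Set.Icc_subset_Icc (div_nonneg (by simpa using ht1) hN.le) ?_
  rw [div_le_one hN]
  exact_mod_cast htN

lemma uIcc_cell_subset_uIcc_zero_one {N t : ℕ} (ht : t ∈ Finset.Icc 1 N) :
    Set.uIcc (((t : ℝ) - 1) / N) ((t : ℝ) / N) ⊆ Set.uIcc 0 1 := by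
  rw [Set.uIcc_of_le zero_le_one,
    Set.uIcc_of_le (div_le_div_of_nonneg_right (by linarith) (Nat.cast_nonneg N))]
  exact Icc_cell_subset_Icc_zero_one ht

lemma two_mul_sub_one_div_two_mul_mem_Icc {N : ℝ} (hN : 0 < N) (t : ℝ) :
    (2 * t - 1) / (2 * N) ∈ Set.Icc ((t - 1) / N) (t / N) := by
  constructor <;> rw [div_le_div_iff₀ (by positivity) (by positivity)] <;> nlinarith

lemma intervalIntegral_eq_sum_cells {E : Type*} [NormedAddCommGroup E] [NormedSpace ℝ E]
    {f : ℝ → E} (hf : IntervalIntegrable f MeasureTheory.volume 0 1) {N : ℕ} (hN : 0 < N) :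
    ∫ u in (0 : ℝ)..1, f u = ∑ t ∈ Finset.Icc 1 N, ∫ u in ((t : ℝ) - 1) / N..(t : ℝ) / N, f u := by
  have hN' : (N : ℝ) ≠ 0 := by exact_mod_cast hN.ne'
  have hcell : ∀ t ∈ Set.Ico 1 (N + 1),
      IntervalIntegrable f MeasureTheory.volume (((t : ℝ) - 1) / N)
        ((((t + 1 : ℕ) : ℝ) - 1) / N) := by
    intro t ht
    replace ht : t ∈ Finset.Icc 1 N := by simpa [Nat.lt_succ_iff] using ht
    refine hf.mono_set ?_
    push_cast
    rw [add_sub_cancel_right]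
    exact uIcc_cell_subset_uIcc_zero_one ht
  have := intervalIntegral.sum_integral_adjacent_intervals_Ico
    (a := fun k : ℕ => ((k : ℝ) - 1) / N) (by omega : 1 ≤ N + 1) hcell
  push_cast at this
  simp only [add_sub_cancel_right, sub_self, zero_div, div_self hN',
    Finset.Ico_add_one_right_eq_Icc] at this
  exact this.symm

lemma norm_integral_sub_mul_le {ψ : ℝ → ℝ} {g : ℝ → ℂ} {K : NNReal} {a b m : ℝ} (hab : a ≤ b)
    (hψ : LipschitzOnWith K ψ (Set.Icc a b)) (hm : m ∈ Set.Icc a b)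
    (hg : ∀ u ∈ Set.Icc a b, ‖g u‖ ≤ 1) :
    ‖∫ u in a..b, ((ψ m : ℂ) - ψ u) * g u‖ ≤ K * (b - a) ^ 2 := by
  have hbound : ∀ u ∈ Set.uIoc a b, ‖((ψ m : ℂ) - ψ u) * g u‖ ≤ K * (b - a) := by
    intro u hu
    rw [Set.uIoc_of_le hab] at hu
    have hu' : u ∈ Set.Icc a b := Set.Ioc_subset_Icc_self hu
    calc ‖((ψ m : ℂ) - ψ u) * g u‖ ≤ dist (ψ m) (ψ u) * 1 := by
          rw [norm_mul, ← ofReal_sub, norm_real, Real.dist_eq, Real.norm_eq_abs]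
          gcongr
          exact hg u hu'
      _ ≤ K * dist m u := by simpa using hψ.dist_le_mul m hm u hu'
      _ ≤ K * (b - a) := by
          gcongr
          rw [Real.dist_eq, abs_sub_le_iff]
          constructor <;> linarith [hm.1, hm.2, hu'.1, hu'.2]
  calc ‖∫ u in a..b, ((ψ m : ℂ) - ψ u) * g u‖ ≤ K * (b - a) * |b - a| :=
        intervalIntegral.norm_integral_le_of_norm_le_const hbound
    _ = K * (b - a) ^ 2 := by rw [abs_of_nonneg (sub_nonneg.2 hab)]; ring

lemma riemann_sum_sub_integral_eq {ψ : ℝ → ℝ} (hψ : ContinuousOn ψ (Set.Icc 0 1)) {N : ℕ}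
    (hN : 0 < N) {lam : ℝ} (hsin : lam ≠ 0 → Real.sin (π * lam) ≠ 0) :
    (1 / N : ℂ) * ∑ t ∈ Finset.Icc 1 N,
        (ψ ((2 * t - 1) / (2 * N)) : ℂ) * exp (-(I * 2 * π * lam * t))
      - (∫ u in (0 : ℝ)..1, (ψ u : ℂ) * exp (-(I * 2 * π * N * lam * u)))
        * exp (-(I * π * lam)) * invSincPi lam
    = exp (-(I * π * lam)) * invSincPi lam * ∑ t ∈ Finset.Icc 1 N,
        ∫ u in ((t : ℝ) - 1) / N..(t : ℝ) / N,
          ((ψ ((2 * t - 1) / (2 * N)) : ℂ) - ψ u) * exp (-(I * 2 * π * N * lam * u)) := by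
  have hexp : Continuous fun u : ℝ => exp (-(I * 2 * π * N * lam * u)) := by fun_prop
  have hint : IntervalIntegrable (fun u => (ψ u : ℂ) * exp (-(I * 2 * π * N * lam * u)))
      MeasureTheory.volume 0 1 :=
    ((continuous_ofReal.comp_continuousOn hψ).mul hexp.continuousOn).intervalIntegrable_of_Icc
      zero_le_one
  rw [intervalIntegral_eq_sum_cells hint hN, Finset.mul_sum, Finset.sum_mul, Finset.sum_mul,
    Finset.mul_sum, ← Finset.sum_sub_distrib]
  refine Finset.sum_congr rfl fun t ht => ?_
  simp_rw [sub_mul]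
  rw [intervalIntegral.integral_sub ((hexp.intervalIntegrable _ _).const_mul _)
    (hint.mono_set (uIcc_cell_subset_uIcc_zero_one ht)), intervalIntegral.integral_const_mul]
  have hexact := integral_exp_mul_exp_mul_invSincPi hN hsin t
  push_cast at hexact
  linear_combination -(ψ ((2 * t - 1) / (2 * N)) : ℂ) * hexact

theorem riemann_sum_lemma_general (ψ : ℝ → ℝ)
    (hψ : ContDiffOn ℝ 1 ψ (Set.Icc 0 1)) :
    ∃ C : ℝ, ∀ N : ℕ, 0 < N → ∀ lam : ℝ, lam ∈ Set.Icc (0 : ℝ) 0.5 →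
      Norm.norm
        ((1 / N : ℂ) * ∑ t ∈ Finset.Icc 1 N,
            (ψ ((2 * t - 1) / (2 * N)) : ℂ) * Complex.exp (-(Complex.I * 2 * Real.pi * lam * t))
          - (∫ u in (0:ℝ)..1, (ψ u : ℂ) * Complex.exp (-(Complex.I * 2 * Real.pi * N * lam * u)))
              * Complex.exp (-(Complex.I * Real.pi * lam))
              * (if lam = 0 then 1 else (Real.pi * lam / Real.sin (Real.pi * lam) : ℂ)))
        ≤ C / N := by
  obtain ⟨K, hK⟩ := hψ.exists_lipschitzOnWith one_ne_zero (convex_Icc 0 1) isCompact_Icc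
  refine ⟨π / 2 * K, fun N hN lam ⟨h0, h1⟩ => ?_⟩
  replace h1 : lam ≤ 1 / 2 := by norm_num at h1 ⊢; exact h1
  have hN' : (0 : ℝ) < N := by exact_mod_cast hN
  have hsin : lam ≠ 0 → Real.sin (π * lam) ≠ 0 := fun hlam =>
    (Real.sin_pos_of_pos_of_lt_pi (by positivity [h0.lt_of_ne' hlam])
      (by nlinarith [Real.pi_pos])).ne'
  have hcell : ∀ t ∈ Finset.Icc 1 N, ‖∫ u in ((t : ℝ) - 1) / N..(t : ℝ) / N,
      ((ψ ((2 * t - 1) / (2 * N)) : ℂ) - ψ u) * exp (-(I * 2 * π * N * lam * u))‖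
        ≤ K * (1 / N) ^ 2 := by
    intro t ht
    convert norm_integral_sub_mul_le (g := fun u => exp (-(I * 2 * π * N * lam * u)))
      (div_le_div_of_nonneg_right (by linarith) hN'.le)
      (hK.mono (Icc_cell_subset_Icc_zero_one ht)) (two_mul_sub_one_div_two_mul_mem_Icc hN' t)
      (fun u _ => by simp [norm_exp]) using 2
    field_simp; ring
  calc _ = ‖exp (-(I * π * lam))‖ * ‖invSincPi lam‖ * ‖∑ t ∈ Finset.Icc 1 N,
        ∫ u in ((t : ℝ) - 1) / N..(t : ℝ) / N,
          ((ψ ((2 * t - 1) / (2 * N)) : ℂ) - ψ u) * exp (-(I * 2 * π * N * lam * u))‖ := by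
        rw [← norm_mul, ← norm_mul, ← riemann_sum_sub_integral_eq hψ.continuousOn hN hsin]
        rfl
    _ ≤ 1 * (π / 2) * ∑ t ∈ Finset.Icc 1 N, K * (1 / N : ℝ) ^ 2 := by
        gcongr
        · simp [norm_exp]
        · exact norm_invSincPi_le h0 h1
        · exact (norm_sum_le _ _).trans (Finset.sum_le_sum hcell)
    _ = π / 2 * K / N := by
        rw [Finset.sum_const, Nat.card_Icc, Nat.add_sub_cancel, nsmul_eq_mul]
        field_simp

theorem riemann_sum_lemma (ψ : ℝ → ℝ) (L : NNReal)
    (hψ : ContDiffOn ℝ 1 ψ (Set.Icc 0 1))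
    (hL : LipschitzOnWith L (deriv ψ) (Set.Icc 0 1)) :
    ∃ C : ℝ, ∀ N : ℕ, 0 < N → ∀ lam : ℝ, lam ∈ Set.Icc (0 : ℝ) 0.5 →
      Norm.norm
        ((1 / N : ℂ) * ∑ t ∈ Finset.Icc 1 N,
            (ψ ((2 * t - 1) / (2 * N)) : ℂ) * Complex.exp (-(Complex.I * 2 * Real.pi * lam * t))
          - (∫ u in (0:ℝ)..1, (ψ u : ℂ) * Complex.exp (-(Complex.I * 2 * Real.pi * N * lam * u)))
              * Complex.exp (-(Complex.I * Real.pi * lam))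
              * (if lam = 0 then 1 else (Real.pi * lam / Real.sin (Real.pi * lam) : ℂ)))
        ≤ C / N :=
  riemann_sum_lemma_general ψ hψ
end

section
/- Define H₂^{(N)}(f) = (1/N) Σ_{t=1}^N h_t² e^{-i 2π t f} where h_t = h((2t−1)/(2N)) for a C¹ function h: [0,1] → ℝ with h(0) = h(1) = 0 and (h²)' Lipschitz. Then there exists a constant C such that |H₂^{(N)}(f)| ≤ C/(N f) for all f with 0 < f ≤ 1/2 and all N ≥ 1. -/
open Real Complex Finset

open scoped NNReal

/-!
Summation by parts. With `z = exp (-2πif)` one has `‖z - 1‖ = 2 sin (πf) ≥ 4f` for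
`0 < f ≤ 1/2`, so every partial sum of `z ^ t` has norm at most `1 / (2f)`. The weights `h²`
sampled at the midpoints `(2t - 1) / (2N)` come from a function that is Lipschitz on `[0, 1]`
(it is `C¹` there), so the last weight plus the total variation of the weights is bounded
independently of `N`; the factor `1 / N` then gives the bound `C / (N f)`.
-/

theorem norm_sum_range_smul_le_of_norm_partial_sum_le {𝕜 E : Type*} [SeminormedRing 𝕜]
    [SeminormedAddCommGroup E] [Module 𝕜 E] [IsBoundedSMul 𝕜 E] (a : ℕ → 𝕜) (w : ℕ → E)
    (n : ℕ) {B : ℝ} (hw : ∀ m, ‖∑ i ∈ range m, w i‖ ≤ B) :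
    ‖∑ i ∈ range n, a i • w i‖ ≤
      B * (‖a (n - 1)‖ + ∑ i ∈ range (n - 1), ‖a (i + 1) - a i‖) := by
  rw [sum_range_by_parts]
  calc _ ≤ ‖a (n - 1) • ∑ i ∈ range n, w i‖
        + ∑ i ∈ range (n - 1), ‖(a (i + 1) - a i) • ∑ j ∈ range (i + 1), w j‖ :=
        (norm_sub_le _ _).trans (add_le_add_right (norm_sum_le _ _) _)
    _ ≤ ‖a (n - 1)‖ * B + ∑ i ∈ range (n - 1), ‖a (i + 1) - a i‖ * B := by
        gcongr with i
        · exact (norm_smul_le _ _).trans (by gcongr; exact hw n)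
        · exact (norm_smul_le _ _).trans (by gcongr; exact hw (i + 1))
    _ = _ := by rw [← sum_mul]; ring

theorem norm_geom_sum_le_of_norm_eq_one {𝕜 : Type*} [NormedDivisionRing 𝕜] {z : 𝕜}
    (hz : ‖z‖ = 1) (hz1 : z ≠ 1) (m : ℕ) :
    ‖∑ i ∈ range m, z ^ i‖ ≤ 2 / ‖z - 1‖ := by
  rw [geom_sum_eq hz1, norm_div]
  gcongr
  calc ‖z ^ m - 1‖ ≤ ‖z ^ m‖ + ‖(1 : 𝕜)‖ := norm_sub_le _ _
    _ = 2 := by rw [norm_pow, hz, one_pow, norm_one]; norm_num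

theorem four_mul_le_norm_exp_neg_sub_one {f : ℝ} (hf0 : 0 ≤ f) (hf : f ≤ 1 / 2) :
    4 * f ≤ ‖Complex.exp (-(I * 2 * π * f)) - 1‖ := by
  have hexp : -(I * 2 * π * f) = I * ((-(2 * π * f) : ℝ) : ℂ) := by push_cast; ring
  have hhalf : -(2 * π * f) / 2 = -(π * f) := by ring
  rw [hexp, norm_exp_I_mul_ofReal_sub_one, hhalf, Real.sin_neg, mul_neg, norm_neg]
  calc 4 * f = 2 * (2 / π * (π * f)) := by field_simp; ring
    _ ≤ 2 * Real.sin (π * f) := by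
        gcongr
        exact mul_le_sin (by positivity) (by nlinarith [pi_pos])
    _ ≤ _ := le_abs_self _

theorem norm_sum_range_exp_pow_succ_le {f : ℝ} (hf0 : 0 < f) (hf : f ≤ 1 / 2) (m : ℕ) :
    ‖∑ i ∈ range m, Complex.exp (-(I * 2 * π * f)) ^ (i + 1)‖ ≤ 1 / (2 * f) := by
  set z := Complex.exp (-(I * 2 * π * f))
  have hz : ‖z‖ = 1 := by
    rw [Complex.norm_exp]
    simp
  have hz1 : 4 * f ≤ ‖z - 1‖ := four_mul_le_norm_exp_neg_sub_one hf0.le hf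
  have hz1' : z ≠ 1 := fun h => by
    rw [h, sub_self, norm_zero] at hz1
    linarith
  calc ‖∑ i ∈ range m, z ^ (i + 1)‖ = ‖∑ i ∈ range m, z ^ i‖ := by
        simp_rw [pow_succ', ← mul_sum, norm_mul, hz, one_mul]
    _ ≤ 2 / ‖z - 1‖ := norm_geom_sum_le_of_norm_eq_one hz hz1' m
    _ ≤ 2 / (4 * f) := by gcongr
    _ = 1 / (2 * f) := by field_simp; ring

theorem LipschitzOnWith.sum_range_dist_le {α : Type*} [PseudoMetricSpace α] {g : ℝ → α}
    {K : ℝ≥0} {s : Set ℝ} (hg : LipschitzOnWith K g s) {x : ℕ → ℝ} (hx : Monotone x) {n : ℕ}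
    (hxs : ∀ i ≤ n, x i ∈ s) :
    ∑ i ∈ range n, dist (g (x (i + 1))) (g (x i)) ≤ K * (x n - x 0) := by
  calc _ ≤ ∑ i ∈ range n, K * (x (i + 1) - x i) := by
        refine sum_le_sum fun i hi => ?_
        have hi := mem_range.1 hi
        refine (hg.dist_le_mul _ (hxs _ hi) _ (hxs _ hi.le)).trans_eq ?_
        rw [Real.dist_eq, abs_of_nonneg (sub_nonneg.2 (hx i.le_succ))]
    _ = K * (x n - x 0) := by rw [← mul_sum, sum_range_sub]

noncomputable def midpointDFT (g : ℝ → ℝ) (N : ℕ) (f : ℝ) : ℂ :=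
  (1 / N : ℂ) * ∑ t ∈ Icc 1 N,
    (g ((2 * t - 1) / (2 * N)) : ℂ) * Complex.exp (-(I * 2 * π * t * f))

theorem LipschitzOnWith.norm_midpointDFT_le {g : ℝ → ℝ} {K : ℝ≥0}
    (hg : LipschitzOnWith K g (Set.Icc 0 1)) {N : ℕ} (hN : 0 < N) {f : ℝ} (hf0 : 0 < f)
    (hf : f ≤ 1 / 2) :
    ‖midpointDFT g N f‖ ≤ (|g 1| + K) / 2 / (N * f) := by
  have hNpos : (0 : ℝ) < N := by exact_mod_cast hN
  set x : ℕ → ℝ := fun i => (2 * i + 1) / (2 * N)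
  have hx_mono : Monotone x := fun i j hij => by simp only [x]; gcongr
  have hx_mem : ∀ i ≤ N - 1, x i ∈ Set.Icc 0 1 := fun i hi => by
    refine ⟨by positivity, (div_le_one (by positivity)).2 ?_⟩
    have : (i : ℝ) + 1 ≤ N := by exact_mod_cast (by omega : i + 1 ≤ N)
    linarith
  have hsum : ∑ t ∈ Icc 1 N,
      (g ((2 * t - 1) / (2 * N)) : ℂ) * Complex.exp (-(I * 2 * π * t * f)) =
      ∑ i ∈ range N, g (x i) • Complex.exp (-(I * 2 * π * f)) ^ (i + 1) := by
    rw [← Ico_add_one_right_eq_Icc, sum_Ico_eq_sum_range, Nat.add_sub_cancel]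
    refine sum_congr rfl fun i _ => ?_
    rw [Complex.real_smul, ← Complex.exp_nat_mul]
    congr 3
    · push_cast; ring
    · push_cast; ring
  have hvar : ‖g (x (N - 1))‖ + ∑ i ∈ range (N - 1), ‖g (x (i + 1)) - g (x i)‖ ≤ |g 1| + K := by
    have hlast := hx_mem (N - 1) le_rfl
    have hend : |g (x (N - 1)) - g 1| ≤ K * (1 - x (N - 1)) := by
      have := hg.dist_le_mul _ hlast 1 ⟨zero_le_one, le_rfl⟩
      rwa [Real.dist_eq, Real.dist_eq, abs_sub_comm (x _),
        abs_of_nonneg (by linarith [hlast.2] : 0 ≤ 1 - x (N - 1))] at this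
    have hinc := hg.sum_range_dist_le hx_mono hx_mem
    rw [Real.norm_eq_abs]
    simp_rw [← dist_eq_norm]
    have hx0 : 0 ≤ (K : ℝ) * x 0 := mul_nonneg K.2 (hx_mem 0 (Nat.zero_le _)).1
    have := norm_le_norm_add_norm_sub' (g (x (N - 1))) (g 1)
    rw [Real.norm_eq_abs, Real.norm_eq_abs, Real.norm_eq_abs] at this
    linarith
  calc ‖midpointDFT g N f‖
      = 1 / N * ‖∑ i ∈ range N, g (x i) • Complex.exp (-(I * 2 * π * f)) ^ (i + 1)‖ := by
        rw [midpointDFT, hsum, norm_mul, norm_div, norm_one, Complex.norm_natCast]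
    _ ≤ 1 / N * (1 / (2 * f) * (|g 1| + K)) := by
        gcongr
        exact (norm_sum_range_smul_le_of_norm_partial_sum_le _ _ N
          (norm_sum_range_exp_pow_succ_le hf0 hf)).trans (by gcongr)
    _ = (|g 1| + K) / 2 / (N * f) := by field_simp

theorem H2_decay_bound_general (h : ℝ → ℝ)
    (hC1 : ContDiffOn ℝ 1 h (Set.Icc 0 1)) :
    ∃ C : ℝ, ∀ N : ℕ, 1 ≤ N → ∀ f : ℝ, 0 < f → f ≤ 1 / 2 →
      ‖(1 / N : ℂ) * ∑ t ∈ Finset.Icc 1 N,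
          ((h ((2 * t - 1) / (2 * N))) ^ 2 : ℝ) * Complex.exp (-(Complex.I * 2 * Real.pi * t * f))‖
        ≤ C / (N * f) := by
  obtain ⟨K, hK⟩ := (hC1.pow 2).exists_lipschitzOnWith one_ne_zero (convex_Icc 0 1) isCompact_Icc
  exact ⟨(|h 1 ^ 2| + K) / 2, fun N hN f hf0 hf => hK.norm_midpointDFT_le hN hf0 hf⟩

theorem H2_decay_bound (h : ℝ → ℝ)
    (hC1 : ContDiffOn ℝ 1 h (Set.Icc 0 1))
    (h0 : h 0 = 0) (h1 : h 1 = 0)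
    (L : NNReal) (hL : LipschitzOnWith L (deriv (fun x => (h x) ^ 2)) (Set.Icc 0 1)) :
    ∃ C : ℝ, ∀ N : ℕ, 1 ≤ N → ∀ f : ℝ, 0 < f → f ≤ 1 / 2 →
      ‖(1 / N : ℂ) * ∑ t ∈ Finset.Icc 1 N,
          ((h ((2 * t - 1) / (2 * N))) ^ 2 : ℝ) * Complex.exp (-(Complex.I * 2 * Real.pi * t * f))‖
        ≤ C / (N * f) :=
  H2_decay_bound_general h hC1
end
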